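/- arXiv:2109.13887 — 6 statements merged into one kernel-verified Lean document; each statement's English description precedes it below -/
import Mathlib

section
/- For every connected graph G of order n with minimum degree δ ≥ 2, the diameter of G is at most 3n/(δ+1) + O(1); concretely, diam(G) ≤ 3n/(δ+1) - 1. -/
/-!
Take a diametral path `v₀ v₁ … v_d` and keep every third vertex `v₀, v₃, …, v_{3⌊d/3⌋}`.
Along a shortest path these vertices are pairwise at distance at least `3`, so their closed
neighbourhoods are pairwise disjoint, and each has at least `δ + 1` vertices. Hence
`(⌊d/3⌋ + 1)(δ + 1) ≤ n`, and `d + 1 ≤ 3(⌊d/3⌋ + 1)` gives `(d + 1)(δ + 1) ≤ 3n`.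
-/

open Finset

namespace SimpleGraph

variable {V : Type*} {G : SimpleGraph V}

theorem Walk.dist_getVert_getVert_of_length_eq_dist {u v : V} {p : G.Walk u v}
    (hp : p.length = G.dist u v) {i j : ℕ} (hij : i ≤ j) (hj : j ≤ p.length) :
    G.dist (p.getVert i) (p.getVert j) = j - i := by
  have hsub : ((p.drop i).take (j - i)).IsSubwalk p :=
    (isSubwalk_take _ _).trans (isSubwalk_drop _ _)
  have h := length_eq_dist_of_subwalk hp hsub
  simp only [take_length, drop_length, drop_getVert, Nat.add_sub_cancel' hij] at h
  omega

theorem disjoint_insert_neighborFinset_of_three_le_dist [DecidableEq V] {u v : V}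
    [Fintype (G.neighborSet u)] [Fintype (G.neighborSet v)] (h : 3 ≤ G.dist u v) :
    Disjoint (insert u (G.neighborFinset u)) (insert v (G.neighborFinset v)) := by
  rw [Finset.disjoint_left]
  intro y hyu hyv
  simp only [mem_insert, mem_neighborFinset] at hyu hyv
  have hu : G.edist u y ≤ 1 := edist_le_one_iff_adj_or_eq.2 (by tauto)
  have hv : G.edist v y ≤ 1 := edist_le_one_iff_adj_or_eq.2 (by tauto)
  have hle : (G.dist u v : ℕ∞) ≤ 2 := by
    rw [(Reachable.of_dist_ne_zero (by omega)).coe_dist_eq_edist]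
    calc G.edist u v ≤ G.edist u y + G.edist y v := G.edist_triangle
      _ = G.edist u y + G.edist v y := by rw [edist_comm (u := y)]
      _ ≤ 2 := (add_le_add hu hv).trans_eq one_add_one_eq_two
  have : G.dist u v ≤ 2 := by exact_mod_cast hle
  omega

theorem card_mul_minDegree_add_one_le [Fintype V] [DecidableRel G.Adj] {ι : Type*}
    (s : Finset ι) (x : ι → V) (hx : ∀ i ∈ s, ∀ j ∈ s, i ≠ j → 3 ≤ G.dist (x i) (x j)) :
    #s * (G.minDegree + 1) ≤ Fintype.card V := by
  classical
  let N : ι → Finset V := fun i ↦ insert (x i) (G.neighborFinset (x i))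
  have hN : ∀ i, G.minDegree + 1 ≤ #(N i) := fun i ↦ by
    rw [card_insert_of_notMem (by simp), card_neighborFinset_eq_degree]
    exact Nat.succ_le_succ (G.minDegree_le_degree _)
  have hdisj : (s : Set ι).PairwiseDisjoint N := fun i hi j hj hij ↦
    disjoint_insert_neighborFinset_of_three_le_dist (hx i hi j hj hij)
  calc #s * (G.minDegree + 1) = ∑ _i ∈ s, (G.minDegree + 1) := by simp
    _ ≤ ∑ i ∈ s, #(N i) := sum_le_sum fun i _ ↦ hN i
    _ = #(s.biUnion N) := (card_biUnion hdisj).symm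
    _ ≤ Fintype.card V := card_le_univ _

theorem Walk.three_le_dist_getVert_mul_three {u v : V} {p : G.Walk u v}
    (hp : p.length = G.dist u v) {i j : ℕ} (hi : i ≤ p.length / 3) (hj : j ≤ p.length / 3)
    (hij : i ≠ j) : 3 ≤ G.dist (p.getVert (3 * i)) (p.getVert (3 * j)) := by
  rcases hij.lt_or_gt with h | h
  · rw [dist_getVert_getVert_of_length_eq_dist hp (by omega) (by omega)]
    omega
  · rw [dist_comm, dist_getVert_getVert_of_length_eq_dist hp (by omega) (by omega)]
    omega

theorem Connected.diam_add_one_mul_minDegree_add_one_le [Fintype V] [DecidableRel G.Adj]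
    (hconn : G.Connected) : (G.diam + 1) * (G.minDegree + 1) ≤ 3 * Fintype.card V := by
  have : Nonempty V := hconn.nonempty
  obtain ⟨u, v, huv⟩ := G.exists_dist_eq_diam
  obtain ⟨p, hp⟩ := hconn.exists_walk_length_eq_dist u v
  have hpack := card_mul_minDegree_add_one_le (range (p.length / 3 + 1))
    (fun i ↦ p.getVert (3 * i)) fun i hi j hj hij ↦
      p.three_le_dist_getVert_mul_three hp (Nat.le_of_lt_succ (mem_range.1 hi))
        (Nat.le_of_lt_succ (mem_range.1 hj)) hij
  rw [card_range] at hpack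
  calc (G.diam + 1) * (G.minDegree + 1)
      ≤ 3 * (p.length / 3 + 1) * (G.minDegree + 1) := by gcongr; omega
    _ ≤ 3 * Fintype.card V := by rw [mul_assoc]; omega

end SimpleGraph

theorem stmt_0_general {V : Type*} [Fintype V] (G : SimpleGraph V) [DecidableRel G.Adj]
    (n δ : ℕ) (hn : Fintype.card V = n)
    (hconn : G.Connected) (hdeg : δ ≤ G.minDegree) :
    (G.diam : ℝ) ≤ 3 * n / (δ + 1) - 1 := by
  have hnat : (G.diam + 1) * (δ + 1) ≤ 3 * n :=
    hn ▸ (Nat.mul_le_mul_left _ (by omega)).trans hconn.diam_add_one_mul_minDegree_add_one_le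
  have hreal : ((G.diam : ℝ) + 1) * (δ + 1) ≤ 3 * n := by exact_mod_cast hnat
  rw [le_sub_iff_add_le, le_div_iff₀ (by positivity)]
  exact hreal

theorem stmt_0 {V : Type*} [Fintype V] (G : SimpleGraph V) [DecidableRel G.Adj]
    (n δ : ℕ) (hn : Fintype.card V = n) (hδ : 2 ≤ δ)
    (hconn : G.Connected) (hdeg : δ ≤ G.minDegree) :
    (G.diam : ℝ) ≤ 3 * n / (δ + 1) - 1 :=
  stmt_0_general G n δ hn hconn hdeg
end

section
/- Let G be a connected graph with a distinguished vertex x of eccentricity equal to diam(G) = D ≥ 2, equipped with a proper k-coloring (k ≥ 3), and layers L_i consisting of vertices at distance i from x. If the last layer L_D uses more than one color, then one can modify G (moving all vertices of L_D not of a chosen color A into layer D−1 and adding edges to differently colored vertices of L_{D−2}) to obtain a connected k-colored layered graph G' with the same order, diameter, and minimum-degree lower bound, in which both the first and last layers use exactly one color, and the layers L_0,...,L_{D−2} are unchanged. -/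
/-!
Let `u` be a vertex at distance `D - 2` from the root and choose a colour `A` occurring in the last
layer such that no vertex of the last layer coloured other than `A` has the colour of `u` (take
`A` to be the colour of `u` if it occurs there). Joining `u` to the last-layer vertices not
coloured `A` keeps the colouring proper, and adding edges preserves connectivity and minimum
degree. The joined vertices drop to distance `D - 1` while all other distances are unchanged: the
proposed distance function grows by at most one along every edge of the new graph, so it bounds
the distance from below, and the new edges realise it. The vertices coloured `A` stay at distance
`D`, so the diameter is still `D` and the last layer is monochromatic.
-/
/-- Each layer `L_i` is the set of vertices at distance `i` from the root. -/
noncomputable def layer {V : Type*} [Fintype V] [DecidableEq V] (G : SimpleGraph V) (x : V) (i : ℕ) :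
    Finset V :=
  Finset.univ.filter (fun v => G.dist x v = i)

section layer

variable {V : Type*} [Fintype V] [DecidableEq V] {G : SimpleGraph V} {x : V}

@[simp]
lemma mem_layer {w : V} {i : ℕ} : w ∈ layer G x i ↔ G.dist x w = i := by
  simp [layer]

lemma layer_zero (hconn : G.Connected) : layer G x 0 = {x} := by
  ext w
  simp [hconn.dist_eq_zero_iff, eq_comm]

end layer

open SimpleGraph

lemma Set.Nonempty.exists_mem_image_forall_ne_imp_ne {α β : Type*} {L : Set α} (hL : L.Nonempty)
    (c : α → β) (b : β) : ∃ A ∈ c '' L, ∀ v ∈ L, c v ≠ A → c v ≠ b := by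
  by_cases hb : b ∈ c '' L
  · exact ⟨b, hb, fun _ _ h => h⟩
  · obtain ⟨v₀, hv₀⟩ := hL
    exact ⟨c v₀, Set.mem_image_of_mem c hv₀, fun v hv _ h => hb ⟨v, hv, h⟩⟩

namespace SimpleGraph

variable {V : Type*} {G H : SimpleGraph V}

lemma Walk.le_add_length {f : V → ℕ} (hf : ∀ a b, G.Adj a b → f b ≤ f a + 1) {u v : V}
    (p : G.Walk u v) : f v ≤ f u + p.length := by
  induction p with
  | nil => simp
  | cons h _ ih =>
    have := hf _ _ h
    rw [Walk.length_cons]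
    omega

lemma Connected.le_add_dist (hconn : G.Connected) {f : V → ℕ}
    (hf : ∀ a b, G.Adj a b → f b ≤ f a + 1) (u v : V) : f v ≤ f u + G.dist u v := by
  obtain ⟨p, hp⟩ := hconn.exists_walk_length_eq_dist u v
  exact hp ▸ p.le_add_length hf

lemma Connected.exists_dist_eq_of_le (hconn : G.Connected) {x v : V} {j : ℕ}
    (hj : j ≤ G.dist x v) : ∃ u, G.dist x u = j := by
  obtain ⟨p, hp⟩ := hconn.exists_walk_length_eq_dist x v
  refine ⟨p.getVert j, ?_⟩
  have := length_eq_dist_of_subwalk hp (p.isSubwalk_take j)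
  rw [Walk.take_length, hp, min_eq_left hj] at this
  exact this.symm

lemma diam_eq_of_le_of_dist_eq (hle : G ≤ H) (hG : G.diam ≠ 0) {x w : V}
    (hxw : H.dist x w = G.diam) : H.diam = G.diam := by
  have hGfin := ediam_ne_top_of_diam_ne_zero hG
  have hHfin : H.ediam ≠ ⊤ := ne_top_of_le_ne_top hGfin (ediam_anti hle)
  exact le_antisymm (diam_anti_of_ediam_ne_top hle hGfin) (hxw ▸ dist_le_diam hHfin)

def attach (G : SimpleGraph V) (u : V) (M : Set V) : SimpleGraph V :=
  G ⊔ fromRel fun a b => a = u ∧ b ∈ M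

section attach

variable {u : V} {M : Set V}

lemma le_attach : G ≤ G.attach u M := le_sup_left

lemma attach_adj_iff {a b : V} :
    (G.attach u M).Adj a b ↔
      G.Adj a b ∨ a ≠ b ∧ (a = u ∧ b ∈ M ∨ b = u ∧ a ∈ M) := by
  simp [attach]

lemma attach_adj_of_mem {v : V} (hv : v ∈ M) (hne : u ≠ v) : (G.attach u M).Adj u v :=
  attach_adj_iff.mpr (Or.inr ⟨hne, Or.inl ⟨rfl, hv⟩⟩)

def Coloring.attach {α : Type*} (c : G.Coloring α) (h : ∀ v ∈ M, c u ≠ c v) :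
    (G.attach u M).Coloring α :=
  Coloring.mk c fun {a b} hab => by
    rcases attach_adj_iff.mp hab with hab | ⟨_, ⟨rfl, hb⟩ | ⟨rfl, ha⟩⟩
    · exact c.valid hab
    · exact h b hb
    · exact (h a ha).symm

lemma Connected.dist_attach [DecidablePred (· ∈ M)] (hconn : G.Connected) {x : V} {d : ℕ}
    (hu : G.dist x u = d) (hM : ∀ v ∈ M, G.dist x v = d + 2)
    (hecc : ∀ w, G.dist x w ≤ d + 2) (w : V) :
    (G.attach u M).dist x w = if w ∈ M then d + 1 else G.dist x w := by
  set f : V → ℕ := fun w => if w ∈ M then d + 1 else G.dist x w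
  change _ = f w
  have hconn' : (G.attach u M).Connected := hconn.mono le_attach
  have hu_notMem : u ∉ M := fun h => by have := hM u h; omega
  have hlip : ∀ a b, (G.attach u M).Adj a b → f b ≤ f a + 1 := by
    intro a b hab
    rcases attach_adj_iff.mp hab with hab | ⟨_, ⟨rfl, hb⟩ | ⟨rfl, ha⟩⟩
    · have := hab.diff_dist_adj (u := x)
      have := hecc a
      have := hecc b
      simp only [f]
      split_ifs with hb ha ha <;> grind
    · simp only [f, if_pos hb, if_neg hu_notMem, hu, le_refl]
    · simp only [f, if_pos ha, if_neg hu_notMem, hu]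
      omega
  have hfx : f x = 0 := by
    have : x ∉ M := fun hx => by simpa using hM x hx
    simp [f, this]
  have hlower := hconn'.le_add_dist hlip x w
  suffices (G.attach u M).dist x w ≤ f w by omega
  by_cases hw : w ∈ M
  · have hxu : (G.attach u M).dist x u ≤ d := hu ▸ (hconn x u).dist_anti le_attach
    have huw : (G.attach u M).dist u w = 1 :=
      dist_eq_one_iff_adj.mpr (attach_adj_of_mem hw fun h => hu_notMem (h ▸ hw))
    have := hconn'.dist_triangle (u := x) (v := u) (w := w)
    simp only [f, if_pos hw]
    omega
  · simpa only [f, if_neg hw] using (hconn x w).dist_anti le_attach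

lemma Connected.layer_attach_of_le [Fintype V] [DecidableEq V] (hconn : G.Connected) {x : V}
    {d : ℕ} (hu : G.dist x u = d) (hM : ∀ v ∈ M, G.dist x v = d + 2)
    (hecc : ∀ w, G.dist x w ≤ d + 2) {i : ℕ} (hi : i ≤ d) :
    layer (G.attach u M) x i = layer G x i := by
  classical
  ext w
  simp only [mem_layer, hconn.dist_attach hu hM hecc]
  split_ifs with hw
  · have := hM w hw
    omega
  · rfl

end attach

end SimpleGraph

theorem stmt_4_general {V : Type*} [Fintype V] [DecidableEq V] (k D δ : ℕ) (hD : 2 ≤ D)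
    (G' : SimpleGraph V) (hconn : G'.Connected)
    (c' : G'.Coloring (Fin k)) (x : V)
    (hdiam : G'.diam = D)
    (hecc_le : ∀ v, G'.dist x v ≤ D) (hecc_eq : ∃ v, G'.dist x v = D)
    (hmindeg : ∀ v, δ ≤ (G'.neighborSet v).ncard) :
    ∃ (G : SimpleGraph V) (_ : DecidableRel G.Adj) (c : G.Coloring (Fin k)) (y : V),
      G.Connected ∧ G.diam = D ∧ (∀ v, δ ≤ (G.neighborSet v).ncard) ∧
      (∀ v, G.dist y v ≤ D) ∧
      ((layer G y 0).image c).card = 1 ∧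
      ((layer G y D).image c).card = 1 ∧
      (∀ v, c v = c' v) ∧
      (∀ i, i ≤ D - 2 → layer G y i = layer G' x i) := by
  classical
  obtain ⟨d, rfl⟩ : ∃ d, D = d + 2 := ⟨D - 2, by omega⟩
  obtain ⟨v₀, hv₀⟩ := hecc_eq
  obtain ⟨u, hu⟩ := hconn.exists_dist_eq_of_le (x := x) (v := v₀) (j := d) (by omega)
  obtain ⟨A, ⟨w₀, hw₀, hw₀A⟩, hA⟩ :=
    Set.Nonempty.exists_mem_image_forall_ne_imp_ne (L := {v | G'.dist x v = d + 2})
      ⟨v₀, hv₀⟩ c' (c' u)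
  simp only [Set.mem_ofPred_eq] at hw₀ hA
  set M : Set V := {v | G'.dist x v = d + 2 ∧ c' v ≠ A}
  set H := G'.attach u M
  have hdist : ∀ w, H.dist x w = if w ∈ M then d + 1 else G'.dist x w :=
    hconn.dist_attach hu (fun _ hv => hv.1) hecc_le
  have hconnH : H.Connected := hconn.mono le_attach
  have hw₀H : H.dist x w₀ = d + 2 := by simp [hdist, M, hw₀, hw₀A]
  have hlast : ∀ w ∈ layer H x (d + 2), c' w = A := by
    intro w hw
    simp only [mem_layer, hdist] at hw
    split_ifs at hw with hwM
    · omega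
    · exact not_not.mp fun hwA => hwM ⟨hw, hwA⟩
  refine ⟨H, Classical.decRel _, c'.attach fun v hv => (hA v hv.1 hv.2).symm, x, hconnH,
    (diam_eq_of_le_of_dist_eq le_attach (by omega) (hw₀H.trans hdiam.symm)).trans hdiam,
    fun v => (hmindeg v).trans (Set.ncard_le_ncard (neighborSet_mono le_attach v)),
    fun v => ?_, by simp [layer_zero hconnH], ?_, fun _ => rfl,
    fun i hi => hconn.layer_attach_of_le hu (fun _ hv => hv.1) hecc_le (by omega)⟩
  · rw [hdist]
    split_ifs
    exacts [by omega, hecc_le v]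
  · rw [Finset.image_congr (f := c'.attach _) (g := fun _ => A) hlast,
      Finset.image_const ⟨w₀, mem_layer.mpr hw₀H⟩, Finset.card_singleton]

theorem stmt_4 {V : Type*} [Fintype V] [DecidableEq V] (k D δ : ℕ) (hk : 3 ≤ k) (hD : 2 ≤ D)
    (G' : SimpleGraph V) [DecidableRel G'.Adj] (hconn : G'.Connected)
    (c' : G'.Coloring (Fin k)) (x : V)
    (hdiam : G'.diam = D)
    (hecc_le : ∀ v, G'.dist x v ≤ D) (hecc_eq : ∃ v, G'.dist x v = D)
    (hmindeg : ∀ v, δ ≤ (G'.neighborSet v).ncard)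
    (hmulti : 1 < ((layer G' x D).image c').card) :
    ∃ (G : SimpleGraph V) (_ : DecidableRel G.Adj) (c : G.Coloring (Fin k)) (y : V),
      G.Connected ∧ G.diam = D ∧ (∀ v, δ ≤ (G.neighborSet v).ncard) ∧
      (∀ v, G.dist y v ≤ D) ∧
      ((layer G y 0).image c).card = 1 ∧
      ((layer G y D).image c).card = 1 ∧
      (∀ v, c v = c' v) ∧
      (∀ i, i ≤ D - 2 → layer G y i = layer G' x i) :=
  stmt_4_general k D δ hD G' hconn c' x hdiam hecc_le hecc_eq hmindeg
end

section
/- In a graph G with a fixed proper k-coloring, distinguished vertex x, and distance layers L_0,...,L_D, adding all edges between differently colored vertices within a layer and between differently colored vertices in consecutive layers (saturation) preserves: the proper k-coloring, the distance from x of each vertex (hence all layers), and the diameter D; moreover it does not decrease any vertex degree. -/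
/-!
Every new edge joins vertices in the same or in consecutive layers, and so does every edge
of `G`; hence along any walk of the saturated graph the layer index grows by at most one per
step, so no new edge shortens a distance from `x`. The layers, and with them the vertex at
distance `D` from `x`, are therefore unchanged, while adding edges can only shrink the
diameter.
-/

namespace SimpleGraph

variable {V : Type*} {G H : SimpleGraph V}

lemma Walk.le_add_length_of_forall_adj {f : V → ℕ} (hf : ∀ a b, H.Adj a b → f b ≤ f a + 1) :
    ∀ {u v : V} (w : H.Walk u v), f v ≤ f u + w.length
  | _, _, .nil => by simp
  | _, _, .cons h p => by
    have := hf _ _ h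
    have := le_add_length_of_forall_adj hf p
    rw [Walk.length_cons]
    omega

lemma Adj.dist_le_add_one {a b : V} (h : G.Adj a b) (x : V) : G.dist x b ≤ G.dist x a + 1 := by
  rcases h.diff_dist_adj (u := x) with h | h | h <;> omega

lemma Connected.dist_eq_of_le_of_forall_adj {x : V} (hG : G.Connected) (hle : G ≤ H)
    (hstep : ∀ a b, H.Adj a b → G.dist x b ≤ G.dist x a + 1) (v : V) :
    H.dist x v = G.dist x v := by
  obtain ⟨w, hw⟩ := ((hG x v).mono hle).exists_walk_length_eq_dist
  refine le_antisymm ((hG x v).dist_anti hle) ?_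
  simpa [hw] using w.le_add_length_of_forall_adj hstep

lemma Connected.diam_eq_of_le_of_dist_eq_diam [Finite V] {x v : V} (hG : G.Connected)
    (hle : G ≤ H) (h : H.dist x v = G.diam) : H.diam = G.diam := by
  have := hG.nonempty
  refine le_antisymm (diam_anti_of_ediam_ne_top hle (connected_iff_ediam_ne_top.1 hG)) ?_
  exact h ▸ H.dist_le_diam (connected_iff_ediam_ne_top.1 (hG.mono hle))

end SimpleGraph

open SimpleGraph

theorem stmt_5_general {V : Type*} [Fintype V] (k : ℕ)
    (G : SimpleGraph V) (hconn : G.Connected) (c : G.Coloring (Fin k))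
    (x : V) (D : ℕ) (hD : G.diam = D)
    (hecc_eq : ∃ v, G.dist x v = D)
    (H : SimpleGraph V)
    (hH : ∀ u v, H.Adj u v ↔ (G.Adj u v ∨ (u ≠ v ∧ c u ≠ c v ∧
      (G.dist x u = G.dist x v ∨ G.dist x u + 1 = G.dist x v ∨
        G.dist x v + 1 = G.dist x u)))) :
    (∀ u v, H.Adj u v → c u ≠ c v) ∧
    (∀ v, H.dist x v = G.dist x v) ∧
    H.diam = D ∧
    (∀ v, (G.neighborSet v).ncard ≤ (H.neighborSet v).ncard) := by
  have hle : G ≤ H := fun a b hab => (hH a b).2 (Or.inl hab)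
  have hstep : ∀ a b, H.Adj a b → G.dist x b ≤ G.dist x a + 1 := by
    intro a b hab
    rcases (hH a b).1 hab with hG | ⟨-, -, hlayer⟩
    · exact hG.dist_le_add_one x
    · omega
  have hdist := hconn.dist_eq_of_le_of_forall_adj hle hstep
  obtain ⟨v, hv⟩ := hecc_eq
  refine ⟨fun u w huw => ?_, hdist, ?_, fun u => Set.ncard_le_ncard fun _ h => hle h⟩
  · rcases (hH u w).1 huw with hG | ⟨-, hc, -⟩
    exacts [c.valid hG, hc]
  · rw [← hD]
    exact hconn.diam_eq_of_le_of_dist_eq_diam hle (by rw [hdist, hv, hD])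

theorem stmt_5 {V : Type*} [Fintype V] [DecidableEq V] (k : ℕ)
    (G : SimpleGraph V) (hconn : G.Connected) (c : G.Coloring (Fin k))
    (x : V) (D : ℕ) (hD : G.diam = D)
    (hecc_le : ∀ v, G.dist x v ≤ D) (hecc_eq : ∃ v, G.dist x v = D)
    (H : SimpleGraph V)
    (hH : ∀ u v, H.Adj u v ↔ (G.Adj u v ∨ (u ≠ v ∧ c u ≠ c v ∧
      (G.dist x u = G.dist x v ∨ G.dist x u + 1 = G.dist x v ∨
        G.dist x v + 1 = G.dist x u)))) :
    (∀ u v, H.Adj u v → c u ≠ c v) ∧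
    (∀ v, H.dist x v = G.dist x v) ∧
    H.diam = D ∧
    (∀ v, (G.neighborSet v).ncard ≤ (H.neighborSet v).ncard) :=
  stmt_5_general k G hconn c x D hD hecc_eq H hH
end

section
/- Let H be a k-colorable layered graph with layers L_0,...,L_D (and L_{−1} = L_{D+1} = ∅), and for each i let S_i = {x ∈ L_i : every vertex of L_{i−1} ∪ L_{i+1} is adjacent to x}. Then for each i, |L_i| ≤ k − max(|S_{i−1}|, |S_{i+1}|). -/
/-!
Each `S j` with `j = i ± 1` lies in the clique `L j` and is completely joined to the clique `L i`,
which is disjoint from it, so `S j ∪ L i` is a clique of a `k`-colorable graph and has at most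
`k` vertices.
-/

namespace SimpleGraph

variable {V : Type*} {G : SimpleGraph V}

theorem IsClique.union_of_forall_adj {s t : Set V} (hs : G.IsClique s) (ht : G.IsClique t)
    (hst : ∀ a ∈ s, ∀ b ∈ t, a ≠ b → G.Adj a b) : G.IsClique (s ∪ t) :=
  Set.pairwise_union.2 ⟨hs, ht, fun a ha b hb hab ↦ ⟨hst a ha b hb hab, (hst a ha b hb hab).symm⟩⟩

theorem card_add_card_le_of_colorable [DecidableEq V] {n : ℕ} (hc : G.Colorable n)
    {s t : Finset V} (hst : Disjoint s t) (hs : G.IsClique (s : Set V))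
    (ht : G.IsClique (t : Set V)) (hadj : ∀ a ∈ s, ∀ b ∈ t, G.Adj a b) :
    s.card + t.card ≤ n := by
  have hclique : G.IsClique ((s ∪ t : Finset V) : Set V) := by
    rw [Finset.coe_union]
    exact hs.union_of_forall_adj ht fun a ha b hb _ ↦ hadj a ha b hb
  rw [← Finset.card_union_of_disjoint hst]
  exact hclique.card_le_of_colorable hc

end SimpleGraph

open Finset in
theorem stmt_7_general {V : Type*} [Fintype V] [DecidableEq V] (H : SimpleGraph V)
    [DecidableRel H.Adj] (k D : ℕ) (hcol : H.Colorable k)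
    (L S : ℤ → Finset V)
    (hdisj : ∀ i j : ℤ, i ≠ j → Disjoint (L i) (L j))
    (hcliq : ∀ i : ℤ, H.IsClique (L i : Set V))
    (hS : ∀ i : ℤ, S i = (L i).filter (fun x => ∀ y ∈ L (i - 1) ∪ L (i + 1), H.Adj x y)) :
    ∀ i : ℤ, 0 ≤ i → i ≤ (D : ℤ) →
      (L i).card ≤ k - max (S (i - 1)).card (S (i + 1)).card := by
  intro i _ _
  have card_S_add_card_L_le : ∀ j : ℤ, (j - 1 = i ∨ j + 1 = i) → #(S j) + #(L i) ≤ k := by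
    intro j hj
    rw [hS j]
    refine SimpleGraph.card_add_card_le_of_colorable hcol
      ((hdisj j i (by omega)).mono_left (filter_subset _ _))
      ((hcliq j).subset (coe_subset.2 (filter_subset _ _))) (hcliq i)
      fun x hx y hy ↦ (mem_filter.1 hx).2 y ?_
    rcases hj with rfl | rfl <;> simp [hy]
  have h₁ := card_S_add_card_L_le (i - 1) (by omega)
  have h₂ := card_S_add_card_L_le (i + 1) (by omega)
  omega

theorem stmt_7 {V : Type*} [Fintype V] [DecidableEq V] (H : SimpleGraph V)
    [DecidableRel H.Adj] (k D : ℕ) (hcol : H.Colorable k)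
    (L S : ℤ → Finset V)
    (hout : ∀ i : ℤ, (i < 0 ∨ (D : ℤ) < i) → L i = ∅)
    (hdisj : ∀ i j : ℤ, i ≠ j → Disjoint (L i) (L j))
    (hcliq : ∀ i : ℤ, H.IsClique (L i : Set V))
    (hS : ∀ i : ℤ, S i = (L i).filter (fun x => ∀ y ∈ L (i - 1) ∪ L (i + 1), H.Adj x y)) :
    ∀ i : ℤ, 0 ≤ i → i ≤ (D : ℤ) →
      (L i).card ≤ k - max (S (i - 1)).card (S (i + 1)).card :=
  stmt_7_general H k D hcol L S hdisj hcliq hS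
end

section
/- With the notation S_i = {x ∈ L_i : L_{i−1} ∪ L_{i+1} ⊆ N(x)} in a k-colorable strongly canonical clump graph with D ≥ 2, one has |S_i| ≤ k − 1 for every layer index 0 ≤ i ≤ D. -/
/-!
A vertex of `S_i` is adjacent to all of `L_{i-1}`, so it is not an endpoint of a non-edge between
`L_{i-1}` and `L_i`. Since those non-edges form a matching, their `L_i`-endpoints are as many as the
non-edges themselves, giving `|S_i| + (max(k, |L_{i-1}| + |L_i|) - k) ≤ |L_i|`, while the matching
also bounds the number of non-edges by `|L_{i-1}|`. The latter forces `|L_i| ≤ k`; when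
`|L_i| = k` the matching saturates `L_{i-1}`, which has at least two vertices, so `|S_i| ≤ k - 2`.
-/

open Finset

section Matching

variable {α β : Type*}

def IsPairMatching (T : Finset (α × β)) : Prop :=
  ∀ p ∈ T, ∀ q ∈ T, (p.1 = q.1 ↔ p.2 = q.2)

theorem IsPairMatching.card_le_of_fst_mem {T : Finset (α × β)} (hT : IsPairMatching T)
    {A : Finset α} (hA : ∀ p ∈ T, p.1 ∈ A) : #T ≤ #A :=
  card_le_card_of_injOn Prod.fst hA fun p hp q hq h => Prod.ext h ((hT p hp q hq).mp h)

theorem IsPairMatching.card_image_snd [DecidableEq β] {T : Finset (α × β)}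
    (hT : IsPairMatching T) : #(T.image Prod.snd) = #T :=
  card_image_of_injOn fun p hp q hq h => Prod.ext ((hT p hp q hq).mpr h) h

end Matching

section NonAdjacency

variable {V : Type*} (H : SimpleGraph V) [DecidableRel H.Adj]

theorem card_nonAdj_le_card_left {A B : Finset V}
    (hT : IsPairMatching ((A ×ˢ B).filter fun p => ¬ H.Adj p.1 p.2)) :
    #((A ×ˢ B).filter fun p => ¬ H.Adj p.1 p.2) ≤ #A :=
  hT.card_le_of_fst_mem fun _ hp => (mem_product.mp (mem_filter.mp hp).1).1

theorem card_add_card_nonAdj_le [DecidableEq V] {A B S : Finset V} (hSB : S ⊆ B)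
    (hSA : ∀ y ∈ S, ∀ a ∈ A, H.Adj y a)
    (hT : IsPairMatching ((A ×ˢ B).filter fun p => ¬ H.Adj p.1 p.2)) :
    #S + #((A ×ˢ B).filter fun p => ¬ H.Adj p.1 p.2) ≤ #B := by
  set T := (A ×ˢ B).filter fun p => ¬ H.Adj p.1 p.2
  have hdisj : Disjoint S (T.image Prod.snd) := by
    refine disjoint_left.mpr fun y hyS hyT => ?_
    obtain ⟨p, hp, rfl⟩ := mem_image.mp hyT
    obtain ⟨hpAB, hnadj⟩ := mem_filter.mp hp
    exact hnadj (hSA _ hyS _ (mem_product.mp hpAB).1).symm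
  have himage : T.image Prod.snd ⊆ B := by
    intro y hy
    obtain ⟨p, hp, rfl⟩ := mem_image.mp hy
    exact (mem_product.mp (mem_filter.mp hp).1).2
  calc #S + #T = #(S ∪ T.image Prod.snd) := by
        rw [card_union_of_disjoint hdisj, hT.card_image_snd]
    _ ≤ #B := card_le_card (union_subset hSB himage)

end NonAdjacency

theorem stmt_8_general {V : Type*} [Fintype V] [DecidableEq V] (H : SimpleGraph V)
    [DecidableRel H.Adj] (k D : ℕ) (hk : 3 ≤ k)
    (L S : ℤ → Finset V)
    (hS : ∀ i : ℤ, S i = (L i).filter (fun y => ∀ z ∈ L (i - 1) ∪ L (i + 1), H.Adj y z))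
    (hL0 : (L 0).card = 1)
    (hfull : ∀ i : ℤ, (L i).card = k →
      2 ≤ i ∧ i ≤ (D : ℤ) - 1 ∧ 2 ≤ min (L (i - 1)).card (L (i + 1)).card)
    (hmatch : ∀ i : ℤ, 1 ≤ i → i ≤ (D : ℤ) →
      (∀ p ∈ ((L (i - 1)) ×ˢ (L i)).filter (fun p => ¬ H.Adj p.1 p.2),
       ∀ q ∈ ((L (i - 1)) ×ˢ (L i)).filter (fun p => ¬ H.Adj p.1 p.2),
        (p.1 = q.1 ↔ p.2 = q.2)) ∧
      (((L (i - 1)) ×ˢ (L i)).filter (fun p => ¬ H.Adj p.1 p.2)).card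
        = max k ((L (i - 1)).card + (L i).card) - k) :
    ∀ i : ℤ, 0 ≤ i → i ≤ (D : ℤ) → (S i).card ≤ k - 1 := by
  intro i hi0 hiD
  have hSL : S i ⊆ L i := hS i ▸ filter_subset _ _
  obtain rfl | hi1 := hi0.eq_or_lt
  · have := card_le_card hSL
    omega
  obtain ⟨hT, hcardT⟩ := hmatch i hi1 hiD
  have hSA : ∀ y ∈ S i, ∀ a ∈ L (i - 1), H.Adj y a := by
    intro y hy a ha
    rw [hS, mem_filter] at hy
    exact hy.2 a (mem_union_left _ ha)
  have hsum := card_add_card_nonAdj_le H hSL hSA hT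
  have hTle := card_nonAdj_le_card_left H hT
  by_cases hLk : #(L i) = k
  · have hprev := (hfull i hLk).2.2.trans (min_le_left _ _)
    omega
  · omega

theorem stmt_8 {V : Type*} [Fintype V] [DecidableEq V] (H : SimpleGraph V)
    [DecidableRel H.Adj] (k D : ℕ) (hk : 3 ≤ k) (hD : 2 ≤ D)
    (hcol : H.Colorable k) (hconn : H.Connected) (x : V)
    (L S : ℤ → Finset V)
    (hL : ∀ (i : ℤ) (v : V), v ∈ L i ↔ (H.dist x v : ℤ) = i)
    (hecc : ∀ v, H.dist x v ≤ D)
    (hS : ∀ i : ℤ, S i = (L i).filter (fun y => ∀ z ∈ L (i - 1) ∪ L (i + 1), H.Adj y z))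
    (hL0 : (L 0).card = 1) (hLD : (L (D : ℤ)).card = 1)
    (hfull : ∀ i : ℤ, (L i).card = k →
      2 ≤ i ∧ i ≤ (D : ℤ) - 1 ∧ 2 ≤ min (L (i - 1)).card (L (i + 1)).card)
    (hmatch : ∀ i : ℤ, 1 ≤ i → i ≤ (D : ℤ) →
      (∀ p ∈ ((L (i - 1)) ×ˢ (L i)).filter (fun p => ¬ H.Adj p.1 p.2),
       ∀ q ∈ ((L (i - 1)) ×ˢ (L i)).filter (fun p => ¬ H.Adj p.1 p.2),
        (p.1 = q.1 ↔ p.2 = q.2)) ∧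
      (((L (i - 1)) ×ˢ (L i)).filter (fun p => ¬ H.Adj p.1 p.2)).card
        = max k ((L (i - 1)).card + (L i).card) - k) :
    ∀ i : ℤ, 0 ≤ i → i ≤ (D : ℤ) → (S i).card ≤ k - 1 :=
  stmt_8_general H k D hk L S hS hL0 hfull hmatch
end

section
/- In a k-colorable strongly canonical clump graph with D ≥ 2: if |S_i| = k − 1 for some i, then L_i = S_i and |L_{i−1}| = |S_{i−1}| = |L_{i+1}| = |S_{i+1}| = 1. -/
/-!
Write `a j = |L j|`. Since the non-edges between consecutive layers form a matching, their
number `max k (a (j-1) + a j) - k` is at most `min (a (j-1)) (a j)`; hence every layer has at most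
`k` vertices, and two consecutive layers are completely joined exactly when `a (j-1) + a j ≤ k`.
If `|S i| = k - 1`, then `a i = k` is impossible: the `a (i-1) ≥ 2` matched vertices of `L i` would
miss `S i`, leaving at most `k - 2` vertices for it. So `L i = S i` is completely joined to both
neighbouring layers, which forces them to be singletons. Finally a singleton layer lies in `S`,
since no layer next to it can have `k` vertices.
-/

open Finset

namespace SimpleGraph

variable {V : Type*} {G : SimpleGraph V}

theorem Reachable.exists_dist_eq {u v : V} (h : G.Reachable u v) {n : ℕ}
    (hn : n ≤ G.dist u v) : ∃ w, G.dist u w = n := by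
  obtain ⟨p, hp⟩ := h.exists_walk_length_eq_dist
  refine ⟨p.getVert n, ?_⟩
  rw [← length_eq_dist_of_subwalk hp (p.isSubwalk_take n), Walk.take_length]
  omega

section ClumpPair

variable [DecidableRel G.Adj] {k : ℕ} {A B : Finset V}

variable (G) in
def nonAdjPairs (A B : Finset V) : Finset (V × V) :=
  (A ×ˢ B).filter fun p => ¬ G.Adj p.1 p.2

variable (G) in
def IsClumpPair (k : ℕ) (A B : Finset V) : Prop :=
  (∀ p ∈ G.nonAdjPairs A B, ∀ q ∈ G.nonAdjPairs A B, (p.1 = q.1 ↔ p.2 = q.2)) ∧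
    #(G.nonAdjPairs A B) = max k (#A + #B) - k

theorem nonAdjPairs_eq_empty_iff :
    G.nonAdjPairs A B = ∅ ↔ ∀ a ∈ A, ∀ b ∈ B, G.Adj a b := by
  simp only [nonAdjPairs, filter_eq_empty_iff, mem_product, not_not, and_imp, Prod.forall]
  exact ⟨fun h a ha b hb => h a b ha hb, fun h a b ha hb => h a ha b hb⟩

namespace IsClumpPair

theorem card_nonAdjPairs_le_left (h : G.IsClumpPair k A B) : #(G.nonAdjPairs A B) ≤ #A :=
  card_le_card_of_injOn Prod.fst
    (fun _ hp => (mem_product.1 (mem_filter.1 hp).1).1)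
    (fun p hp q hq hpq => Prod.ext hpq ((h.1 p hp q hq).1 hpq))

theorem card_nonAdjPairs_le_right (h : G.IsClumpPair k A B) : #(G.nonAdjPairs A B) ≤ #B :=
  card_le_card_of_injOn Prod.snd
    (fun _ hp => (mem_product.1 (mem_filter.1 hp).1).2)
    (fun p hp q hq hpq => Prod.ext ((h.1 p hp q hq).2 hpq) hpq)

theorem card_left_le (h : G.IsClumpPair k A B) : #A ≤ k := by
  have := h.card_nonAdjPairs_le_right
  have := h.2
  omega

theorem card_right_le (h : G.IsClumpPair k A B) : #B ≤ k := by
  have := h.card_nonAdjPairs_le_left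
  have := h.2
  omega

theorem forall_adj_iff (h : G.IsClumpPair k A B) :
    (∀ a ∈ A, ∀ b ∈ B, G.Adj a b) ↔ #A + #B ≤ k := by
  rw [← nonAdjPairs_eq_empty_iff, ← card_eq_zero, h.2]
  omega

theorem card_add_card_nonAdjPairs_le {T : Finset V} (hTB : T ⊆ B)
    (hT : ∀ b ∈ T, ∀ a ∈ A, G.Adj a b) (h : G.IsClumpPair k A B) :
    #T + #(G.nonAdjPairs A B) ≤ #B := by
  classical
  have hinj : Set.InjOn Prod.snd (G.nonAdjPairs A B : Set (V × V)) :=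
    fun p hp q hq hpq => Prod.ext ((h.1 p hp q hq).2 hpq) hpq
  have hdisj : Disjoint T ((G.nonAdjPairs A B).image Prod.snd) := by
    rw [Finset.disjoint_left]
    intro b hb hb'
    obtain ⟨p, hp, rfl⟩ := mem_image.1 hb'
    obtain ⟨hpAB, hnadj⟩ := mem_filter.1 hp
    exact hnadj (hT p.2 hb p.1 (mem_product.1 hpAB).1)
  rw [← card_image_of_injOn hinj, ← card_union_of_disjoint hdisj]
  refine card_le_card (union_subset hTB ?_)
  intro b hb
  obtain ⟨p, hp, rfl⟩ := mem_image.1 hb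
  exact (mem_product.1 (mem_filter.1 hp).1).2

theorem card_add_card_left_le_of_card_right_eq {T : Finset V} (hTB : T ⊆ B)
    (hT : ∀ b ∈ T, ∀ a ∈ A, G.Adj a b) (h : G.IsClumpPair k A B) (hB : #B = k) :
    #T + #A ≤ k := by
  have hcount := h.2
  rw [hB, max_eq_right (by omega), Nat.add_sub_cancel] at hcount
  have := h.card_add_card_nonAdjPairs_le hTB hT
  omega

theorem card_left_eq_one (h : G.IsClumpPair k A B) (hadj : ∀ a ∈ A, ∀ b ∈ B, G.Adj a b)
    (hA : A.Nonempty) (hB : k - 1 ≤ #B) : #A = 1 := by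
  have := h.forall_adj_iff.1 hadj
  have := hA.card_pos
  omega

theorem card_right_eq_one (h : G.IsClumpPair k A B) (hadj : ∀ a ∈ A, ∀ b ∈ B, G.Adj a b)
    (hA : k - 1 ≤ #A) (hB : B.Nonempty) : #B = 1 := by
  have := h.forall_adj_iff.1 hadj
  have := hB.card_pos
  omega

end IsClumpPair

end ClumpPair

section Layers

variable {x : V} {L : ℤ → Finset V} {D : ℕ}

theorem layer_index_nonneg (hL : ∀ (i : ℤ) (v : V), v ∈ L i ↔ (G.dist x v : ℤ) = i)
    {i : ℤ} {v : V} (hv : v ∈ L i) : 0 ≤ i := by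
  rw [← (hL i v).1 hv]
  positivity

theorem layer_index_le (hL : ∀ (i : ℤ) (v : V), v ∈ L i ↔ (G.dist x v : ℤ) = i)
    (hecc : ∀ v, G.dist x v ≤ D) {i : ℤ} {v : V} (hv : v ∈ L i) : i ≤ D := by
  rw [← (hL i v).1 hv]
  exact_mod_cast hecc v

theorem layer_nonempty (hconn : G.Connected)
    (hL : ∀ (i : ℤ) (v : V), v ∈ L i ↔ (G.dist x v : ℤ) = i) {v : V} (hv : v ∈ L D)
    {i : ℤ} (hi0 : 0 ≤ i) (hiD : i ≤ D) : (L i).Nonempty := by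
  lift i to ℕ using hi0
  have hvD : G.dist x v = D := by exact_mod_cast (hL D v).1 hv
  obtain ⟨u, hu⟩ := (hconn x v).exists_dist_eq (n := i) (by omega)
  exact ⟨u, (hL i u).2 (by rw [hu])⟩

theorem forall_adj_of_card_layer_eq_one [DecidableEq V] [DecidableRel G.Adj] {k : ℕ}
    (hL : ∀ (i : ℤ) (v : V), v ∈ L i ↔ (G.dist x v : ℤ) = i) (hecc : ∀ v, G.dist x v ≤ D)
    (hfull : ∀ i : ℤ, #(L i) = k → 2 ≤ min #(L (i - 1)) #(L (i + 1)))
    (hmatch : ∀ i : ℤ, 1 ≤ i → i ≤ D → G.IsClumpPair k (L (i - 1)) (L i))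
    {i : ℤ} (hi : #(L i) = 1) : ∀ y ∈ L i, ∀ z ∈ L (i - 1) ∪ L (i + 1), G.Adj y z := by
  obtain ⟨y₀, hy₀⟩ := card_pos.1 (hi ▸ one_pos)
  intro y hy z hz
  rcases mem_union.1 hz with hz | hz
  · have hpair := hmatch i (by linarith [layer_index_nonneg hL hz])
      (layer_index_le hL hecc hy₀)
    have hprev : #(L (i - 1)) ≠ k := fun h => by
      have := (hfull (i - 1) h).trans (min_le_right _ _)
      rw [sub_add_cancel] at this
      omega
    have := hpair.card_left_le
    exact (hpair.forall_adj_iff.2 (by omega) z hz y hy).symm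
  · have hpair := hmatch (i + 1) (by linarith [layer_index_nonneg hL hy₀])
      (layer_index_le hL hecc hz)
    rw [add_sub_cancel_right] at hpair
    have hnext : #(L (i + 1)) ≠ k := fun h => by
      have := (hfull (i + 1) h).trans (min_le_left _ _)
      rw [add_sub_cancel_right] at this
      omega
    have := hpair.card_right_le
    exact hpair.forall_adj_iff.2 (by omega) y hy z hz

end Layers

end SimpleGraph

open SimpleGraph

theorem stmt_11_general {V : Type*} [Fintype V] [DecidableEq V] (H : SimpleGraph V)
    [DecidableRel H.Adj] (k D : ℕ) (hk : 3 ≤ k)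
    (hconn : H.Connected) (x : V)
    (L S : ℤ → Finset V)
    (hL : ∀ (i : ℤ) (v : V), v ∈ L i ↔ (H.dist x v : ℤ) = i)
    (hecc : ∀ v, H.dist x v ≤ D)
    (hS : ∀ i : ℤ, S i = (L i).filter (fun y => ∀ z ∈ L (i - 1) ∪ L (i + 1), H.Adj y z))
    (hL0 : (L 0).card = 1) (hLD : (L (D : ℤ)).card = 1)
    (hfull : ∀ i : ℤ, (L i).card = k →
      2 ≤ i ∧ i ≤ (D : ℤ) - 1 ∧ 2 ≤ min (L (i - 1)).card (L (i + 1)).card)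
    (hmatch : ∀ i : ℤ, 1 ≤ i → i ≤ (D : ℤ) →
      (∀ p ∈ ((L (i - 1)) ×ˢ (L i)).filter (fun p => ¬ H.Adj p.1 p.2),
       ∀ q ∈ ((L (i - 1)) ×ˢ (L i)).filter (fun p => ¬ H.Adj p.1 p.2),
        (p.1 = q.1 ↔ p.2 = q.2)) ∧
      (((L (i - 1)) ×ˢ (L i)).filter (fun p => ¬ H.Adj p.1 p.2)).card
        = max k ((L (i - 1)).card + (L i).card) - k) :
    ∀ i : ℤ, 0 ≤ i → i ≤ (D : ℤ) → (S i).card = k - 1 →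
      L i = S i ∧ (L (i - 1)).card = 1 ∧ (S (i - 1)).card = 1 ∧
        (L (i + 1)).card = 1 ∧ (S (i + 1)).card = 1 := by
  intro i hi0 hiD hSi
  have hpair : ∀ j : ℤ, 1 ≤ j → j ≤ D → H.IsClumpPair k (L (j - 1)) (L j) := hmatch
  have hmin := fun j hj => (hfull j hj).2.2
  have hSL (j : ℤ) : S j ⊆ L j := hS j ▸ filter_subset _ _
  obtain ⟨v, hv⟩ := card_pos.1 (hLD ▸ one_pos)
  have hne (j : ℤ) (hj0 : 0 ≤ j) (hjD : j ≤ D) := layer_nonempty hconn hL hv hj0 hjD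
  have hi0' : i ≠ 0 := by rintro rfl; have := card_le_card (hSL 0); omega
  have hiD' : i ≠ D := by rintro rfl; have := card_le_card (hSL D); omega
  have hLi : #(L i) = k - 1 := by
    have hle := (hpair i (by omega) hiD).card_right_le
    suffices #(L i) ≠ k by have := card_le_card (hSL i); omega
    intro hLk
    have := (hmin i hLk).trans (min_le_left _ _)
    have hSadj : ∀ y ∈ S i, ∀ a ∈ L (i - 1), H.Adj a y := fun y hy a ha => by
      rw [hS, mem_filter] at hy
      exact (hy.2 a (mem_union_left _ ha)).symm
    have := (hpair i (by omega) hiD).card_add_card_left_le_of_card_right_eq (hSL i) hSadj hLk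
    omega
  have hLS : L i = S i := (eq_of_subset_of_card_le (hSL i) (by omega)).symm
  have hadj : ∀ y ∈ L i, ∀ z ∈ L (i - 1) ∪ L (i + 1), H.Adj y z := fun y hy => by
    rw [hLS, hS] at hy
    exact (mem_filter.1 hy).2
  have hprev : #(L (i - 1)) = 1 := (hpair i (by omega) hiD).card_left_eq_one
    (fun a ha b hb => (hadj b hb a (mem_union_left _ ha)).symm) (hne (i - 1) (by omega) (by omega))
    hLi.ge
  have hnext : #(L (i + 1)) = 1 := by
    have h := hpair (i + 1) (by omega) (by omega)
    rw [add_sub_cancel_right] at h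
    exact h.card_right_eq_one (fun a ha b hb => hadj a ha b (mem_union_right _ hb)) hLi.ge
      (hne (i + 1) (by omega) (by omega))
  have hSeq {j : ℤ} (hj : #(L j) = 1) : S j = L j := by
    rw [hS, filter_true_of_mem (forall_adj_of_card_layer_eq_one hL hecc hmin hpair hj)]
  exact ⟨hLS, hprev, hSeq hprev ▸ hprev, hnext, hSeq hnext ▸ hnext⟩

theorem stmt_11 {V : Type*} [Fintype V] [DecidableEq V] (H : SimpleGraph V)
    [DecidableRel H.Adj] (k D : ℕ) (hk : 3 ≤ k) (hD : 2 ≤ D)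
    (hcol : H.Colorable k) (hconn : H.Connected) (x : V)
    (L S : ℤ → Finset V)
    (hL : ∀ (i : ℤ) (v : V), v ∈ L i ↔ (H.dist x v : ℤ) = i)
    (hecc : ∀ v, H.dist x v ≤ D)
    (hS : ∀ i : ℤ, S i = (L i).filter (fun y => ∀ z ∈ L (i - 1) ∪ L (i + 1), H.Adj y z))
    (hL0 : (L 0).card = 1) (hLD : (L (D : ℤ)).card = 1)
    (hfull : ∀ i : ℤ, (L i).card = k →
      2 ≤ i ∧ i ≤ (D : ℤ) - 1 ∧ 2 ≤ min (L (i - 1)).card (L (i + 1)).card)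
    (hmatch : ∀ i : ℤ, 1 ≤ i → i ≤ (D : ℤ) →
      (∀ p ∈ ((L (i - 1)) ×ˢ (L i)).filter (fun p => ¬ H.Adj p.1 p.2),
       ∀ q ∈ ((L (i - 1)) ×ˢ (L i)).filter (fun p => ¬ H.Adj p.1 p.2),
        (p.1 = q.1 ↔ p.2 = q.2)) ∧
      (((L (i - 1)) ×ˢ (L i)).filter (fun p => ¬ H.Adj p.1 p.2)).card
        = max k ((L (i - 1)).card + (L i).card) - k) :
    ∀ i : ℤ, 0 ≤ i → i ≤ (D : ℤ) → (S i).card = k - 1 →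
      L i = S i ∧ (L (i - 1)).card = 1 ∧ (S (i - 1)).card = 1 ∧
        (L (i + 1)).card = 1 ∧ (S (i + 1)).card = 1 :=
  stmt_11_general H k D hk hconn x L S hL hecc hS hL0 hLD hfull hmatch
end
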